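/- Fix an integer k ≥ 2. Then R_n^{(k,∅,0,0)}(x) = n! for all n ≤ k, and for every n > k, R_n^{(k,∅,0,0)}(x) = k! · (x+k)(x+k+1)⋯(x+n−1). -/

import Mathlib

/-- Number of points in quadrant I relative to `(i, σ i)`. -/
def quad1 {n : ℕ} (σ : Equiv.Perm (Fin n)) (i : Fin n) : ℕ :=
  (Finset.univ.filter (fun j => i < j ∧ σ i < σ j)).card

/-- Number of points in quadrant II relative to `(i, σ i)`. -/
def quad2 {n : ℕ} (σ : Equiv.Perm (Fin n)) (i : Fin n) : ℕ :=
  (Finset.univ.filter (fun j => j < i ∧ σ i < σ j)).card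

/-- `mmp^{(k,∅,0,0)}(σ)`: the number of indices `i` with at least `k` points
in quadrant I and exactly 0 points in quadrant II relative to `(i, σ i)`. -/
def mmpKE {n : ℕ} (k : ℕ) (σ : Equiv.Perm (Fin n)) : ℕ :=
  (Finset.univ.filter (fun i => k ≤ quad1 σ i ∧ quad2 σ i = 0)).card

/-- `R_n^{(k,∅,0,0)}(x) = Σ_{σ ∈ S_n} x^{mmp^{(k,∅,0,0)}(σ)}`. -/
noncomputable def R (k n : ℕ) : Polynomial ℤ :=
  ∑ σ : Equiv.Perm (Fin n), Polynomial.X ^ mmpKE k σ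

open Finset Polynomial

/-!
Inserting the smallest value at position `p` of a permutation of `Fin n` is a bijection
`Fin (n + 1) × S_n ≃ S_(n + 1)`. The new point lies below every other point, so it changes no
other point's quadrant counts; it has nothing above it to its left exactly when `p = 0`, and
then it has `n` points in quadrant I. Hence `mmp` grows by one exactly for `p = 0` when `k ≤ n`,
giving `R_(n+1) = (x + n) R_n` for `n ≥ k`, while for `n ≤ k` no point has `k` points in
quadrant I, so `R_n = n!`.
-/

section InsertMin

variable {n : ℕ} (p : Fin (n + 1)) (τ : Equiv.Perm (Fin n))

/-- Insert the value `0` at position `p` of `τ`, shifting all other values up by one. -/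
def insertMin : Equiv.Perm (Fin (n + 1)) :=
  (finSuccEquiv' p).trans ((Equiv.optionCongr τ).trans (finSuccEquiv' 0).symm)

@[simp]
lemma insertMin_self : insertMin p τ p = 0 := by
  simp [insertMin, finSuccEquiv'_symm_none]

@[simp]
lemma insertMin_succAbove (a : Fin n) : insertMin p τ (p.succAbove a) = (τ a).succ := by
  simp [insertMin, finSuccEquiv'_symm_some]

lemma insertMin_eq_zero_iff {j : Fin (n + 1)} : insertMin p τ j = 0 ↔ j = p := by
  rw [← insertMin_self p τ, (insertMin p τ).injective.eq_iff]

lemma card_filter_insertMin_lt (Q : Fin (n + 1) → Prop) [DecidablePred Q] (a : Fin n) :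
    #{j | Q j ∧ insertMin p τ (p.succAbove a) < insertMin p τ j} =
      #{b | Q (p.succAbove b) ∧ τ a < τ b} := by
  rw [← card_map p.succAboveEmb]
  congr 1
  ext j
  obtain rfl | ⟨b, rfl⟩ := eq_or_ne j p |>.imp id Fin.exists_succAbove_eq
  · simp [Fin.succAbove_ne]
  · simp

lemma quad1_insertMin_succAbove (a : Fin n) :
    quad1 (insertMin p τ) (p.succAbove a) = quad1 τ a := by
  simpa only [quad1, Fin.succAbove_lt_succAbove_iff] using
    card_filter_insertMin_lt p τ (p.succAbove a < ·) a

lemma quad2_insertMin_succAbove (a : Fin n) :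
    quad2 (insertMin p τ) (p.succAbove a) = quad2 τ a := by
  simpa only [quad2, Fin.succAbove_lt_succAbove_iff] using
    card_filter_insertMin_lt p τ (· < p.succAbove a) a

lemma quad2_insertMin_self_eq_zero_iff : quad2 (insertMin p τ) p = 0 ↔ p = 0 := by
  rw [quad2, card_eq_zero, filter_eq_empty_iff, insertMin_self]
  constructor
  · intro h
    by_contra hp
    refine h (mem_univ 0) ⟨Fin.pos_iff_ne_zero.2 hp, Fin.pos_iff_ne_zero.2 ?_⟩
    rw [Ne, insertMin_eq_zero_iff]
    exact Ne.symm hp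
  · rintro rfl j - ⟨hj, -⟩
    exact Fin.not_lt_zero j hj

lemma quad1_insertMin_zero : quad1 (insertMin 0 τ) 0 = n := by
  have : ({j | 0 < j ∧ insertMin 0 τ 0 < insertMin 0 τ j} : Finset (Fin (n + 1))) =
      univ.erase 0 := by
    ext j
    simp [Fin.pos_iff_ne_zero, insertMin_eq_zero_iff]
  rw [quad1, this, card_erase_of_mem (mem_univ _)]
  simp

lemma mmpKE_insertMin (k : ℕ) :
    mmpKE k (insertMin p τ) = mmpKE k τ + if p = 0 ∧ k ≤ n then 1 else 0 := by
  have hp : (k ≤ quad1 (insertMin p τ) p ∧ quad2 (insertMin p τ) p = 0) ↔ (p = 0 ∧ k ≤ n) := by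
    rw [quad2_insertMin_self_eq_zero_iff, and_comm, and_congr_right_iff]
    rintro rfl
    rw [quad1_insertMin_zero]
  have hrest : ((univ.map p.succAboveEmb).filter
      (fun i => k ≤ quad1 (insertMin p τ) i ∧ quad2 (insertMin p τ) i = 0)).card = mmpKE k τ := by
    simp only [filter_map, card_map, Function.comp_def, Fin.succAboveEmb_apply,
      quad1_insertMin_succAbove, quad2_insertMin_succAbove, mmpKE]
  rw [mmpKE, Fin.univ_succAbove n p, filter_cons, ← hrest]
  simp only [hp]
  split_ifs <;> simp

lemma insertMin_bijective :
    Function.Bijective (fun x : Fin (n + 1) × Equiv.Perm (Fin n) => insertMin x.1 x.2) := by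
  rw [Fintype.bijective_iff_injective_and_card]
  refine ⟨?_, by simp [Fintype.card_perm, Nat.factorial_succ]⟩
  rintro ⟨p, τ⟩ ⟨q, ρ⟩ h
  replace h : insertMin p τ = insertMin q ρ := h
  obtain rfl : p = q := by
    rw [← insertMin_eq_zero_iff q ρ, ← h, insertMin_self]
  obtain rfl : τ = ρ := Equiv.ext fun a => by simpa using congr($h (p.succAbove a))
  rfl

end InsertMin

lemma mmpKE_eq_zero_of_le {n k : ℕ} (h : n ≤ k) (σ : Equiv.Perm (Fin n)) : mmpKE k σ = 0 := by
  rw [mmpKE, card_eq_zero, filter_eq_empty_iff]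
  rintro i - ⟨hi, -⟩
  have : quad1 σ i < n := by
    rw [quad1]
    simpa using card_lt_univ_of_notMem (x := i) (by simp)
  omega

lemma R_of_le {k n : ℕ} (h : n ≤ k) : R k n = (n.factorial : ℤ[X]) := by
  simp [R, mmpKE_eq_zero_of_le h, Fintype.card_perm]

lemma R_succ {k n : ℕ} (h : k ≤ n) : R k (n + 1) = (X + (n : ℤ[X])) * R k n := by
  have hterm (p : Fin (n + 1)) (τ : Equiv.Perm (Fin n)) :
      (X : ℤ[X]) ^ mmpKE k (insertMin p τ) = (if p = 0 then X else 1) * X ^ mmpKE k τ := by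
    rw [mmpKE_insertMin]
    split_ifs <;> simp_all [pow_succ, mul_comm]
  rw [R, ← insertMin_bijective.sum_comp (fun σ => (X : ℤ[X]) ^ mmpKE k σ),
    Fintype.sum_prod_type]
  simp only [hterm, ← mul_sum, ← sum_mul]
  rw [R]
  congr 1
  simp [Fin.sum_univ_succ, Fin.succ_ne_zero]

lemma R_of_ge {k n : ℕ} (h : k ≤ n) :
    R k n = (k.factorial : ℤ[X]) * ∏ i ∈ Ico k n, (X + (i : ℤ[X])) := by
  induction n, h using Nat.le_induction with
  | base => simp [R_of_le le_rfl]
  | succ n hkn ih =>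
    rw [R_succ hkn, ih, prod_Ico_succ_top hkn]
    ring

theorem stmt_6_general (k : ℕ) :
    (∀ n, n ≤ k → R k n = (Nat.factorial n : Polynomial ℤ)) ∧
    (∀ n, k < n → R k n =
      (Nat.factorial k : Polynomial ℤ) *
        ∏ i ∈ Finset.Icc k (n - 1), (Polynomial.X + (i : Polynomial ℤ))) := by
  refine ⟨fun n h => R_of_le h, fun n h => ?_⟩
  rw [R_of_ge h.le, Icc_sub_one_right_eq_Ico_of_not_isMin]
  exact not_isMin_of_lt h

theorem stmt_6 (k : ℕ) (hk : 2 ≤ k) :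
    (∀ n, n ≤ k → R k n = (Nat.factorial n : Polynomial ℤ)) ∧
    (∀ n, k < n → R k n =
      (Nat.factorial k : Polynomial ℤ) *
        ∏ i ∈ Finset.Icc k (n - 1), (Polynomial.X + (i : Polynomial ℤ))) :=
  stmt_6_general k
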